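/- arXiv:2112.09622 — 2 statements merged into one kernel-verified Lean document; each statement's English description precedes it below -/
import Mathlib

section
/- In the limit model 0 = max(−q, min(p_ℓ − max(p̲_in, p_r), min(p̄_out, p_ℓ) − p_r, max(q_set − q, p_ℓ − p̄_in, p̲_out − p_r))), any solution with q > 0 satisfies p_ℓ ≥ p_r. -/
theorem limit_model_positive_flow_implies_pressure_drop
    (pℓ pr q pin_lo pin_hi pout_lo pout_hi qset : ℝ)
    (h : 0 = max (-q) (min (pℓ - max pin_lo pr)
          (min (min pout_hi pℓ - pr)
            (max (qset - q) (max (pℓ - pin_hi) (pout_lo - pr))))))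
    (hq : 0 < q) :
    pr ≤ pℓ := by
  set M := min (pℓ - max pin_lo pr)
          (min (min pout_hi pℓ - pr)
            (max (qset - q) (max (pℓ - pin_hi) (pout_lo - pr)))) with hM
  have hmax : max (-q) M = 0 := h.symm
  have hM0 : M = 0 := by
    rcases max_choice (-q) M with h1 | h1 <;> rw [h1] at hmax
    · linarith [le_max_right (-q) M, hmax ▸ le_max_right (-q) M]
    · exact hmax
  have h2 : M ≤ pℓ - max pin_lo pr := min_le_left _ _
  have h3 : pr ≤ max pin_lo pr := le_max_right _ _
  linarith
end

section
/- In the limit model 0 = max(−q, min(p_ℓ − max(p̲_in, p_r), min(p̄_out, p_ℓ) − p_r, max(q_set − q, p_ℓ − p̄_in, p̲_out − p_r))), any solution with q > 0 satisfies p_ℓ ≥ p̲_in and p_r ≤ p̄_out. -/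
theorem limit_model_positive_flow_pressure_targets
    (pℓ pr q pin_lo pin_hi pout_lo pout_hi qset : ℝ)
    (h : 0 = max (-q) (min (pℓ - max pin_lo pr)
          (min (min pout_hi pℓ - pr)
            (max (qset - q) (max (pℓ - pin_hi) (pout_lo - pr))))))
    (hq : 0 < q) :
    pin_lo ≤ pℓ ∧ pr ≤ pout_hi := by
  have hb : (0:ℝ) ≤ min (pℓ - max pin_lo pr)
      (min (min pout_hi pℓ - pr)
        (max (qset - q) (max (pℓ - pin_hi) (pout_lo - pr)))) := by
    rcases max_cases (-q) (min (pℓ - max pin_lo pr)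
      (min (min pout_hi pℓ - pr)
        (max (qset - q) (max (pℓ - pin_hi) (pout_lo - pr))))) with ⟨h1, h2⟩ | ⟨h1, h2⟩ <;>
      linarith [h, h1]
  have hA := le_trans hb (min_le_left _ _)
  have hB := le_trans hb (le_trans (min_le_right _ _) (min_le_left _ _))
  constructor
  · have := le_max_left pin_lo pr; linarith
  · have := min_le_left pout_hi pℓ; linarith
end
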